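/- Let x* be a global minimizer of E(x) = ‖x‖₁ - α‖x‖₂ + l(x), where l has L-Lipschitz gradient. Then for every 0 < λ < 1/L, x* is a fixed point of the forward-backward operator: x* ∈ prox_{λ r_α}(x* - λ∇l(x*)). -/

import Mathlib

open Finset Filter Set
open scoped RealInnerProductSpace

noncomputable def norm1 {N : ℕ} (x : EuclideanSpace ℝ (Fin N)) : ℝ := ∑ i, |x i|

noncomputable def normInf {N : ℕ} (x : EuclideanSpace ℝ (Fin N)) : ℝ := ⨆ i, |x i|

noncomputable def Fobj {N : ℕ} (a lam : ℝ) (y x : EuclideanSpace ℝ (Fin N)) : ℝ :=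
  norm1 x - a * ‖x‖ + 1 / (2 * lam) * ‖x - y‖ ^ 2

/-!
Expanding the square in the proximal objective `F = Fobj α λ (x - λ ∇l(x))` gives
`F(z) - F(x) = r(z) - r(x) + ⟪∇l(x), z - x⟫ + ‖z - x‖² / (2λ)`, where `r = ‖·‖₁ - α‖·‖₂`.
The descent lemma `l(z) ≤ l(x) + ⟪∇l(x), z - x⟫ + (L/2)‖z - x‖²` bounds this from below by
`E(z) - E(x) + (1/(2λ) - L/2)‖z - x‖²`, which is nonnegative at a global minimiser `x` of `E`
as soon as `λ < 1/L`.
-/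

section InnerProductSpace

variable {E : Type*} [NormedAddCommGroup E] [InnerProductSpace ℝ E]

theorem norm_sub_sub_smul_sq (x z d : E) (lam : ℝ) :
    ‖z - (x - lam • d)‖ ^ 2 = ‖z - x‖ ^ 2 + 2 * lam * ⟪d, z - x⟫ + lam ^ 2 * ‖d‖ ^ 2 := by
  rw [show z - (x - lam • d) = (z - x) + lam • d by abel, norm_add_sq_real, norm_smul,
    real_inner_smul_right, real_inner_comm, mul_pow, Real.norm_eq_abs, sq_abs]
  ring

variable [CompleteSpace E]

theorem HasGradientAt.hasDerivAt_comp_add_smul {l : E → ℝ} {x v g' : E} {t : ℝ}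
    (h : HasGradientAt l g' (x + t • v)) :
    HasDerivAt (fun s : ℝ => l (x + s • v)) ⟪g', v⟫ t := by
  have hline : HasDerivAt (fun s : ℝ => x + s • v) v t := by
    simpa using ((hasDerivAt_id t).smul_const v).const_add x
  have hcomp := h.hasFDerivAt.comp_hasDerivAt t hline
  simp only [InnerProductSpace.toDual_apply_apply] at hcomp
  exact hcomp

theorem le_add_inner_add_sq_of_lipschitz_gradient {L : ℝ} {l : E → ℝ} {g : E → E}
    (hg : ∀ z, HasGradientAt l (g z) z) (hLip : ∀ z w, ‖g z - g w‖ ≤ L * ‖z - w‖) (x v : E) :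
    l (x + v) ≤ l x + ⟪g x, v⟫ + L / 2 * ‖v‖ ^ 2 := by
  set φ : ℝ → ℝ := fun t => l (x + t • v) - t * ⟪g x, v⟫ - t ^ 2 * (L / 2 * ‖v‖ ^ 2)
  have hφ : ∀ t, HasDerivAt φ (⟪g (x + t • v), v⟫ - ⟪g x, v⟫ - 2 * t * (L / 2 * ‖v‖ ^ 2)) t :=
    fun t => (((hg (x + t • v)).hasDerivAt_comp_add_smul).sub
      (by simpa using (hasDerivAt_id t).mul_const ⟪g x, v⟫)).sub
      (by simpa using (hasDerivAt_pow 2 t).mul_const (L / 2 * ‖v‖ ^ 2))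
  have hφ_anti : AntitoneOn φ (Icc 0 1) := by
    refine antitoneOn_of_hasDerivWithinAt_nonpos (convex_Icc 0 1)
      (fun t _ => (hφ t).continuousAt.continuousWithinAt) (fun t _ => (hφ t).hasDerivWithinAt) ?_
    intro t ht
    rw [interior_Icc] at ht
    have hinc : ⟪g (x + t • v) - g x, v⟫ ≤ L * t * ‖v‖ ^ 2 :=
      calc ⟪g (x + t • v) - g x, v⟫ ≤ ‖g (x + t • v) - g x‖ * ‖v‖ := real_inner_le_norm _ _
        _ ≤ L * ‖x + t • v - x‖ * ‖v‖ := by gcongr; exact hLip _ _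
        _ = L * t * ‖v‖ ^ 2 := by
          rw [add_sub_cancel_left, norm_smul, Real.norm_of_nonneg ht.1.le]; ring
    rw [inner_sub_left] at hinc
    linarith
  have h10 : φ 1 ≤ φ 0 := hφ_anti (by norm_num) (by norm_num) zero_le_one
  simp only [φ, one_smul, zero_smul, add_zero, one_pow, one_mul, zero_mul, sub_zero] at h10
  linarith

end InnerProductSpace

theorem fobj_sub_fobj_gradientStep {N : ℕ} (a lam : ℝ) (hlam : lam ≠ 0)
    (x z d : EuclideanSpace ℝ (Fin N)) :
    Fobj a lam (x - lam • d) z - Fobj a lam (x - lam • d) x =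
      norm1 z - a * ‖z‖ - (norm1 x - a * ‖x‖) + ⟪d, z - x⟫ + 1 / (2 * lam) * ‖z - x‖ ^ 2 := by
  simp only [Fobj, norm_sub_sub_smul_sq, sub_self, norm_zero, inner_zero_right]
  field_simp
  ring

theorem fobj_gradientStep_sufficient_decrease {N : ℕ} (a L lam : ℝ) (hlam : 0 < lam)
    {l : EuclideanSpace ℝ (Fin N) → ℝ} {g : EuclideanSpace ℝ (Fin N) → EuclideanSpace ℝ (Fin N)}
    (hg : ∀ z, HasGradientAt l (g z) z) (hLip : ∀ z w, ‖g z - g w‖ ≤ L * ‖z - w‖)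
    (x z : EuclideanSpace ℝ (Fin N)) :
    norm1 z - a * ‖z‖ + l z - (norm1 x - a * ‖x‖ + l x) + (1 / (2 * lam) - L / 2) * ‖z - x‖ ^ 2 ≤
      Fobj a lam (x - lam • g x) z - Fobj a lam (x - lam • g x) x := by
  have hdesc := le_add_inner_add_sq_of_lipschitz_gradient hg hLip x (z - x)
  rw [add_sub_cancel] at hdesc
  rw [fobj_sub_fobj_gradientStep a lam hlam.ne']
  linarith

theorem stmt11_general {N : ℕ} (a L : ℝ)
    (l : EuclideanSpace ℝ (Fin N) → ℝ)
    (g : EuclideanSpace ℝ (Fin N) → EuclideanSpace ℝ (Fin N))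
    (hg : ∀ z, HasGradientAt l (g z) z)
    (hLip : ∀ z w, ‖g z - g w‖ ≤ L * ‖z - w‖)
    (xs : EuclideanSpace ℝ (Fin N))
    (hmin : ∀ z, norm1 xs - a * ‖xs‖ + l xs ≤ norm1 z - a * ‖z‖ + l z) :
    ∀ lam : ℝ, 0 < lam → lam < 1 / L →
      IsMinOn (Fobj a lam (xs - lam • g xs)) Set.univ xs := by
  intro lam hlam hlamL z _
  have hL : 0 < L := one_div_pos.mp (hlam.trans hlamL)
  have hstep : L / 2 ≤ 1 / (2 * lam) := by
    rw [lt_div_iff₀ hL] at hlamL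
    rw [div_le_div_iff₀ two_pos (by positivity)]
    nlinarith
  have hgap : 0 ≤ (1 / (2 * lam) - L / 2) * ‖z - xs‖ ^ 2 :=
    mul_nonneg (sub_nonneg.mpr hstep) (sq_nonneg _)
  have hdecrease := fobj_gradientStep_sufficient_decrease a L lam hlam hg hLip xs z
  have hmin_z := hmin z
  show Fobj a lam _ xs ≤ Fobj a lam _ z
  linarith

theorem stmt11 {N : ℕ} (a L : ℝ) (ha : 0 ≤ a) (hL : 0 < L)
    (l : EuclideanSpace ℝ (Fin N) → ℝ)
    (g : EuclideanSpace ℝ (Fin N) → EuclideanSpace ℝ (Fin N))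
    (hg : ∀ z, HasGradientAt l (g z) z)
    (hLip : ∀ z w, ‖g z - g w‖ ≤ L * ‖z - w‖)
    (xs : EuclideanSpace ℝ (Fin N))
    (hmin : ∀ z, norm1 xs - a * ‖xs‖ + l xs ≤ norm1 z - a * ‖z‖ + l z) :
    ∀ lam : ℝ, 0 < lam → lam < 1 / L →
      IsMinOn (Fobj a lam (xs - lam • g xs)) Set.univ xs :=
  stmt11_general a L l g hg hLip xs hmin
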